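/- arXiv:2102.03172 — 2 statements merged into one kernel-verified Lean document; each statement's English description precedes it below -/
import Mathlib

section
/- Let δ : ℝ → ℝ be continuous and K(t,x,p) = h(t,p) + r·x·p for a smooth function h and constant r ∈ ℝ. Suppose Ω(t,x,u,p) is a C³ function satisfying the three determining equations: (i) (δ/2)p²∂_{pp}Ω + p∂_uΩ·∂_pK + ∂_xΩ·∂_pK − ∂_uΩ·K − ∂_pΩ·∂_xK + ∂_tΩ = 0; (ii) δp²∂_{up}Ω + δp∂_{px}Ω − δ∂_xΩ = 0; (iii) (δ/2)p²∂_{uu}Ω + δp∂_{ux}Ω + (δ/2)∂_{xx}Ω = 0, with δ(t) > 0 for all t. Then ∂_{ux}Ω = 0, ∂_{uu}Ω = 0 and ∂_{xx}Ω = 0; in particular Ω is of the form Ω(t,x,u,p) = f₁(t,p)·u + f₂(t,p)·x + f₃(t,p). -/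
open Real

namespace Stmt6

/-- Partial derivative in `t` of a function of `(t,x,u,p)`. -/
noncomputable def pt (F : ℝ → ℝ → ℝ → ℝ → ℝ) : ℝ → ℝ → ℝ → ℝ → ℝ :=
  fun t x u p => deriv (fun s => F s x u p) t

/-- Partial derivative in `x`. -/
noncomputable def px (F : ℝ → ℝ → ℝ → ℝ → ℝ) : ℝ → ℝ → ℝ → ℝ → ℝ :=
  fun t x u p => deriv (fun s => F t s u p) x

/-- Partial derivative in `u`. -/
noncomputable def pu (F : ℝ → ℝ → ℝ → ℝ → ℝ) : ℝ → ℝ → ℝ → ℝ → ℝ :=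
  fun t x u p => deriv (fun s => F t x s p) u

/-- Partial derivative in `p`. -/
noncomputable def pp (F : ℝ → ℝ → ℝ → ℝ → ℝ) : ℝ → ℝ → ℝ → ℝ → ℝ :=
  fun t x u p => deriv (fun s => F t x u s) p

abbrev E4 : Type := ℝ × ℝ × ℝ × ℝ

noncomputable def DL (v : E4) (G : E4 → ℝ) : E4 → ℝ := fun z => fderiv ℝ G z v

def et : E4 := (1,0,0,0)
def ex : E4 := (0,1,0,0)
def eu : E4 := (0,0,1,0)
def ep : E4 := (0,0,0,1)

lemma hasDerivAt_line_t {G : E4 → ℝ} {t x u p : ℝ}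
    (hG : DifferentiableAt ℝ G (t,x,u,p)) :
    HasDerivAt (fun s => G (s,x,u,p)) (DL et G (t,x,u,p)) t := by
  have hl : HasDerivAt (fun s : ℝ => ((s,x,u,p) : E4)) et t :=
    (hasDerivAt_id' t).prodMk ((hasDerivAt_const t x).prodMk
      ((hasDerivAt_const t u).prodMk (hasDerivAt_const t p)))
  exact hG.hasFDerivAt.comp_hasDerivAt t hl

lemma hasDerivAt_line_x {G : E4 → ℝ} {t x u p : ℝ}
    (hG : DifferentiableAt ℝ G (t,x,u,p)) :
    HasDerivAt (fun s => G (t,s,u,p)) (DL ex G (t,x,u,p)) x := by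
  have hl : HasDerivAt (fun s : ℝ => ((t,s,u,p) : E4)) ex x :=
    (hasDerivAt_const x t).prodMk ((hasDerivAt_id' x).prodMk
      ((hasDerivAt_const x u).prodMk (hasDerivAt_const x p)))
  exact hG.hasFDerivAt.comp_hasDerivAt x hl

lemma hasDerivAt_line_u {G : E4 → ℝ} {t x u p : ℝ}
    (hG : DifferentiableAt ℝ G (t,x,u,p)) :
    HasDerivAt (fun s => G (t,x,s,p)) (DL eu G (t,x,u,p)) u := by
  have hl : HasDerivAt (fun s : ℝ => ((t,x,s,p) : E4)) eu u :=
    (hasDerivAt_const u t).prodMk ((hasDerivAt_const u x).prodMk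
      ((hasDerivAt_id' u).prodMk (hasDerivAt_const u p)))
  exact hG.hasFDerivAt.comp_hasDerivAt u hl

lemma hasDerivAt_line_p {G : E4 → ℝ} {t x u p : ℝ}
    (hG : DifferentiableAt ℝ G (t,x,u,p)) :
    HasDerivAt (fun s => G (t,x,u,s)) (DL ep G (t,x,u,p)) p := by
  have hl : HasDerivAt (fun s : ℝ => ((t,x,u,s) : E4)) ep p :=
    (hasDerivAt_const p t).prodMk ((hasDerivAt_const p x).prodMk
      ((hasDerivAt_const p u).prodMk (hasDerivAt_id' p)))
  exact hG.hasFDerivAt.comp_hasDerivAt p hl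

lemma cd_DL1 {F : E4 → ℝ} (hF : ContDiff ℝ 3 F) (v : E4) : ContDiff ℝ 2 (DL v F) :=
  (hF.fderiv_right (by norm_num)).clm_apply contDiff_const

lemma cd_DL2 {F : E4 → ℝ} (hF : ContDiff ℝ 3 F) (a b : E4) :
    ContDiff ℝ 1 (DL a (DL b F)) :=
  ((cd_DL1 hF b).fderiv_right (by norm_num)).clm_apply contDiff_const

lemma DL_swap {G : E4 → ℝ} (hG : ContDiff ℝ 2 G) (a b z : E4) :
    DL a (DL b G) z = DL b (DL a G) z := by
  have hdiff : Differentiable ℝ G := hG.differentiable two_ne_zero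
  have hf : ∀ y, HasFDerivAt G (fderiv ℝ G y) y := fun y => (hdiff y).hasFDerivAt
  have h1 : ContDiff ℝ 1 (fderiv ℝ G) := hG.fderiv_right (by norm_num)
  have hdz : DifferentiableAt ℝ (fderiv ℝ G) z := (h1.differentiable one_ne_zero) z
  have hsym := second_derivative_symmetric hf hdz.hasFDerivAt a b
  have key : ∀ w : E4, fderiv ℝ (fun y => fderiv ℝ G y w) z
      = (fderiv ℝ (fderiv ℝ G) z).flip w := by
    intro w
    have := fderiv_clm_apply (c := fderiv ℝ G) (u := fun _ => w) hdz
      (differentiableAt_const w)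
    simpa using this
  show fderiv ℝ (fun y => fderiv ℝ G y b) z a = fderiv ℝ (fun y => fderiv ℝ G y a) z b
  rw [key b, key a]
  exact hsym

lemma pt_eq {H : ℝ → ℝ → ℝ → ℝ → ℝ} {G : E4 → ℝ} (hG : Differentiable ℝ G)
    (hHG : ∀ t x u p, H t x u p = G (t,x,u,p)) (t x u p : ℝ) :
    pt H t x u p = DL et G (t,x,u,p) := by
  have hfun : (fun s => H s x u p) = fun s => G (s,x,u,p) := funext fun s => hHG s x u p
  show deriv (fun s => H s x u p) t = _
  rw [hfun]
  exact (hasDerivAt_line_t (hG _)).deriv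

lemma px_eq {H : ℝ → ℝ → ℝ → ℝ → ℝ} {G : E4 → ℝ} (hG : Differentiable ℝ G)
    (hHG : ∀ t x u p, H t x u p = G (t,x,u,p)) (t x u p : ℝ) :
    px H t x u p = DL ex G (t,x,u,p) := by
  have hfun : (fun s => H t s u p) = fun s => G (t,s,u,p) := funext fun s => hHG t s u p
  show deriv (fun s => H t s u p) x = _
  rw [hfun]
  exact (hasDerivAt_line_x (hG _)).deriv

lemma pu_eq {H : ℝ → ℝ → ℝ → ℝ → ℝ} {G : E4 → ℝ} (hG : Differentiable ℝ G)
    (hHG : ∀ t x u p, H t x u p = G (t,x,u,p)) (t x u p : ℝ) :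
    pu H t x u p = DL eu G (t,x,u,p) := by
  have hfun : (fun s => H t x s p) = fun s => G (t,x,s,p) := funext fun s => hHG t x s p
  show deriv (fun s => H t x s p) u = _
  rw [hfun]
  exact (hasDerivAt_line_u (hG _)).deriv

lemma pp_eq {H : ℝ → ℝ → ℝ → ℝ → ℝ} {G : E4 → ℝ} (hG : Differentiable ℝ G)
    (hHG : ∀ t x u p, H t x u p = G (t,x,u,p)) (t x u p : ℝ) :
    pp H t x u p = DL ep G (t,x,u,p) := by
  have hfun : (fun s => H t x u s) = fun s => G (t,x,u,s) := funext fun s => hHG t x u s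
  show deriv (fun s => H t x u s) p = _
  rw [hfun]
  exact (hasDerivAt_line_p (hG _)).deriv

theorem aux (F : E4 → ℝ) (hF : ContDiff ℝ 3 F)
    (δ : ℝ → ℝ) (hδpos : ∀ t, 0 < δ t) (r : ℝ) (g1 g2 : ℝ → ℝ → ℝ)
    (E1 : ∀ t x u p : ℝ, δ t / 2 * p ^ 2 * DL ep (DL ep F) (t,x,u,p)
        + p * DL eu F (t,x,u,p) * (g1 t p + r * x)
        + DL ex F (t,x,u,p) * (g1 t p + r * x)
        - DL eu F (t,x,u,p) * (g2 t p + r * x * p)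
        - DL ep F (t,x,u,p) * (r * p)
        + DL et F (t,x,u,p) = 0)
    (E2 : ∀ t x u p : ℝ, p ^ 2 * DL eu (DL ep F) (t,x,u,p)
        + p * DL ex (DL ep F) (t,x,u,p) - DL ex F (t,x,u,p) = 0)
    (E3 : ∀ t x u p : ℝ, p ^ 2 * DL eu (DL eu F) (t,x,u,p)
        + 2 * p * DL eu (DL ex F) (t,x,u,p) + DL ex (DL ex F) (t,x,u,p) = 0) :
    (∀ z : E4, DL eu (DL eu F) z = 0) ∧ (∀ z : E4, DL eu (DL ex F) z = 0)
      ∧ (∀ z : E4, DL ex (DL ex F) z = 0)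
      ∧ ∃ f₁ f₂ f₃ : ℝ → ℝ → ℝ, ∀ t x u p : ℝ,
          F (t,x,u,p) = f₁ t p * u + f₂ t p * x + f₃ t p := by
  have hdF : Differentiable ℝ F := hF.differentiable (by norm_num)
  have hd1 : ∀ v, Differentiable ℝ (DL v F) := fun v =>
    (cd_DL1 hF v).differentiable two_ne_zero
  have hd2 : ∀ a b, Differentiable ℝ (DL a (DL b F)) := fun a b =>
    (cd_DL2 hF a b).differentiable one_ne_zero
  have swap2 : ∀ a b z, DL a (DL b F) z = DL b (DL a F) z := fun a b z =>
    DL_swap (hF.of_le (by norm_num)) a b z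
  have swap12 : ∀ a b c z, DL a (DL b (DL c F)) z = DL b (DL a (DL c F)) z :=
    fun a b c z => DL_swap (cd_DL1 hF c) a b z
  have swap23 : ∀ a b c z, DL a (DL b (DL c F)) z = DL a (DL c (DL b F)) z := by
    intro a b c z
    have hfun : DL b (DL c F) = DL c (DL b F) := funext fun w => DL_swap
      (hF.of_le (by norm_num)) b c w
    rw [hfun]
  -- derivative of E2 in u
  have d2u : ∀ t x u p : ℝ, p ^ 2 * DL eu (DL eu (DL ep F)) (t,x,u,p)
      + p * DL eu (DL ex (DL ep F)) (t,x,u,p) - DL eu (DL ex F) (t,x,u,p) = 0 := by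
    intro t x u p
    have H : HasDerivAt (fun s => p ^ 2 * DL eu (DL ep F) (t,x,s,p)
        + p * DL ex (DL ep F) (t,x,s,p) - DL ex F (t,x,s,p))
        (p ^ 2 * DL eu (DL eu (DL ep F)) (t,x,u,p)
          + p * DL eu (DL ex (DL ep F)) (t,x,u,p) - DL eu (DL ex F) (t,x,u,p)) u :=
      (((hasDerivAt_line_u (hd2 eu ep _)).const_mul (p ^ 2)).add
        ((hasDerivAt_line_u (hd2 ex ep _)).const_mul p)).sub
        (hasDerivAt_line_u (hd1 ex _))
    have H0 := H.congr_of_eventuallyEq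
      (Filter.Eventually.of_forall (fun s => (E2 t x s p).symm))
    exact H0.unique (hasDerivAt_const u 0)
  -- derivative of E2 in x
  have d2x : ∀ t x u p : ℝ, p ^ 2 * DL ex (DL eu (DL ep F)) (t,x,u,p)
      + p * DL ex (DL ex (DL ep F)) (t,x,u,p) - DL ex (DL ex F) (t,x,u,p) = 0 := by
    intro t x u p
    have H : HasDerivAt (fun s => p ^ 2 * DL eu (DL ep F) (t,s,u,p)
        + p * DL ex (DL ep F) (t,s,u,p) - DL ex F (t,s,u,p))
        (p ^ 2 * DL ex (DL eu (DL ep F)) (t,x,u,p)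
          + p * DL ex (DL ex (DL ep F)) (t,x,u,p) - DL ex (DL ex F) (t,x,u,p)) x :=
      (((hasDerivAt_line_x (hd2 eu ep _)).const_mul (p ^ 2)).add
        ((hasDerivAt_line_x (hd2 ex ep _)).const_mul p)).sub
        (hasDerivAt_line_x (hd1 ex _))
    have H0 := H.congr_of_eventuallyEq
      (Filter.Eventually.of_forall (fun s => (E2 t s u p).symm))
    exact H0.unique (hasDerivAt_const x 0)
  -- derivative of E2 in p
  have d2p : ∀ t x u p : ℝ, 2 * p * DL eu (DL ep F) (t,x,u,p)
      + p ^ 2 * DL ep (DL eu (DL ep F)) (t,x,u,p)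
      + DL ex (DL ep F) (t,x,u,p) + p * DL ep (DL ex (DL ep F)) (t,x,u,p)
      - DL ep (DL ex F) (t,x,u,p) = 0 := by
    intro t x u p
    have hsq : HasDerivAt (fun s : ℝ => s ^ 2) (2 * p) p := by
      simpa using hasDerivAt_pow 2 p
    have H : HasDerivAt (fun s => s ^ 2 * DL eu (DL ep F) (t,x,u,s)
        + s * DL ex (DL ep F) (t,x,u,s) - DL ex F (t,x,u,s))
        (2 * p * DL eu (DL ep F) (t,x,u,p)
          + p ^ 2 * DL ep (DL eu (DL ep F)) (t,x,u,p)
          + (1 * DL ex (DL ep F) (t,x,u,p)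
            + p * DL ep (DL ex (DL ep F)) (t,x,u,p))
          - DL ep (DL ex F) (t,x,u,p)) p :=
      ((hsq.mul (hasDerivAt_line_p (hd2 eu ep _))).add
        ((hasDerivAt_id' p).mul (hasDerivAt_line_p (hd2 ex ep _)))).sub
        (hasDerivAt_line_p (hd1 ex _))
    have H0 := H.congr_of_eventuallyEq
      (Filter.Eventually.of_forall (fun s => (E2 t x u s).symm))
    have hval := H0.unique (hasDerivAt_const p 0)
    linear_combination hval
  -- derivative of E3 in p
  have d3p : ∀ t x u p : ℝ, 2 * p * DL eu (DL eu F) (t,x,u,p)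
      + p ^ 2 * DL ep (DL eu (DL eu F)) (t,x,u,p)
      + 2 * DL eu (DL ex F) (t,x,u,p)
      + 2 * p * DL ep (DL eu (DL ex F)) (t,x,u,p)
      + DL ep (DL ex (DL ex F)) (t,x,u,p) = 0 := by
    intro t x u p
    have hsq : HasDerivAt (fun s : ℝ => s ^ 2) (2 * p) p := by
      simpa using hasDerivAt_pow 2 p
    have hlin : HasDerivAt (fun s : ℝ => 2 * s) 2 p := by
      simpa using (hasDerivAt_id' p).const_mul (2:ℝ)
    have H : HasDerivAt (fun s => s ^ 2 * DL eu (DL eu F) (t,x,u,s)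
        + 2 * s * DL eu (DL ex F) (t,x,u,s) + DL ex (DL ex F) (t,x,u,s))
        (2 * p * DL eu (DL eu F) (t,x,u,p)
          + p ^ 2 * DL ep (DL eu (DL eu F)) (t,x,u,p)
          + (2 * DL eu (DL ex F) (t,x,u,p)
            + 2 * p * DL ep (DL eu (DL ex F)) (t,x,u,p))
          + DL ep (DL ex (DL ex F)) (t,x,u,p)) p :=
      ((hsq.mul (hasDerivAt_line_p (hd2 eu eu _))).add
        (hlin.mul (hasDerivAt_line_p (hd2 eu ex _)))).add
        (hasDerivAt_line_p (hd2 ex ex _))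
    have H0 := H.congr_of_eventuallyEq
      (Filter.Eventually.of_forall (fun s => (E3 t x u s).symm))
    have hval := H0.unique (hasDerivAt_const p 0)
    linear_combination hval
  -- B = -p A and C = p^2 A  (for p ≠ 0)
  have hBC : ∀ t x u p : ℝ, p ≠ 0 →
      DL eu (DL ex F) (t,x,u,p) = -p * DL eu (DL eu F) (t,x,u,p)
      ∧ DL ex (DL ex F) (t,x,u,p) = p ^ 2 * DL eu (DL eu F) (t,x,u,p) := by
    intro t x u p hp
    have e3 := E3 t x u p
    have h3p := d3p t x u p
    have h2u := d2u t x u p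
    have h2x := d2x t x u p
    have π1 : DL ep (DL eu (DL eu F)) (t,x,u,p) = DL eu (DL eu (DL ep F)) (t,x,u,p) :=
      (swap12 ep eu eu _).trans (swap23 eu ep eu _)
    have π2 : DL ep (DL eu (DL ex F)) (t,x,u,p) = DL eu (DL ex (DL ep F)) (t,x,u,p) :=
      (swap12 ep eu ex _).trans (swap23 eu ep ex _)
    have π3 : DL ep (DL ex (DL ex F)) (t,x,u,p) = DL ex (DL ex (DL ep F)) (t,x,u,p) :=
      (swap12 ep ex ex _).trans (swap23 ex ep ex _)
    have π4 : DL ex (DL eu (DL ep F)) (t,x,u,p) = DL eu (DL ex (DL ep F)) (t,x,u,p) :=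
      swap12 ex eu ep _
    have key : p * (DL eu (DL ex F) (t,x,u,p) + p * DL eu (DL eu F) (t,x,u,p)) = 0 := by
      linear_combination p * h3p - p * h2u - h2x - e3 - p ^ 3 * π1
        - 2 * p ^ 2 * π2 - p * π3 + p ^ 2 * π4
    have hB : DL eu (DL ex F) (t,x,u,p) = -p * DL eu (DL eu F) (t,x,u,p) := by
      rcases mul_eq_zero.1 key with h | h
      · exact absurd h hp
      · linarith
    refine ⟨hB, ?_⟩
    linear_combination e3 - 2 * p * hB
  -- derivative of E1 in u
  have d1u : ∀ t x u p : ℝ, δ t / 2 * p ^ 2 * DL eu (DL ep (DL ep F)) (t,x,u,p)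
      + p * DL eu (DL eu F) (t,x,u,p) * (g1 t p + r * x)
      + DL eu (DL ex F) (t,x,u,p) * (g1 t p + r * x)
      - DL eu (DL eu F) (t,x,u,p) * (g2 t p + r * x * p)
      - DL eu (DL ep F) (t,x,u,p) * (r * p)
      + DL eu (DL et F) (t,x,u,p) = 0 := by
    intro t x u p
    have H : HasDerivAt (fun s => δ t / 2 * p ^ 2 * DL ep (DL ep F) (t,x,s,p)
        + p * DL eu F (t,x,s,p) * (g1 t p + r * x)
        + DL ex F (t,x,s,p) * (g1 t p + r * x)
        - DL eu F (t,x,s,p) * (g2 t p + r * x * p)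
        - DL ep F (t,x,s,p) * (r * p)
        + DL et F (t,x,s,p))
        (δ t / 2 * p ^ 2 * DL eu (DL ep (DL ep F)) (t,x,u,p)
          + p * DL eu (DL eu F) (t,x,u,p) * (g1 t p + r * x)
          + DL eu (DL ex F) (t,x,u,p) * (g1 t p + r * x)
          - DL eu (DL eu F) (t,x,u,p) * (g2 t p + r * x * p)
          - DL eu (DL ep F) (t,x,u,p) * (r * p)
          + DL eu (DL et F) (t,x,u,p)) u := by
      have h1 := (hasDerivAt_line_u (hd2 ep ep (t,x,u,p))).const_mul (δ t / 2 * p ^ 2)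
      have h2 := ((hasDerivAt_line_u (hd1 eu (t,x,u,p))).const_mul p).mul_const
        (g1 t p + r * x)
      have h3 := (hasDerivAt_line_u (hd1 ex (t,x,u,p))).mul_const (g1 t p + r * x)
      have h4 := (hasDerivAt_line_u (hd1 eu (t,x,u,p))).mul_const (g2 t p + r * x * p)
      have h5 := (hasDerivAt_line_u (hd1 ep (t,x,u,p))).mul_const (r * p)
      have h6 := hasDerivAt_line_u (hd1 et (t,x,u,p))
      exact ((((h1.add h2).add h3).sub h4).sub h5).add h6
    have H0 := H.congr_of_eventuallyEq
      (Filter.Eventually.of_forall (fun s => (E1 t x s p).symm))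
    exact H0.unique (hasDerivAt_const u 0)
  -- derivative of E1 in x
  have d1x : ∀ t x u p : ℝ, δ t / 2 * p ^ 2 * DL ex (DL ep (DL ep F)) (t,x,u,p)
      + (p * DL ex (DL eu F) (t,x,u,p) * (g1 t p + r * x)
        + p * DL eu F (t,x,u,p) * r)
      + (DL ex (DL ex F) (t,x,u,p) * (g1 t p + r * x) + DL ex F (t,x,u,p) * r)
      - (DL ex (DL eu F) (t,x,u,p) * (g2 t p + r * x * p)
        + DL eu F (t,x,u,p) * (r * p))
      - DL ex (DL ep F) (t,x,u,p) * (r * p)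
      + DL ex (DL et F) (t,x,u,p) = 0 := by
    intro t x u p
    have hC1 : HasDerivAt (fun s : ℝ => g1 t p + r * s) (r * 1) x :=
      (hasDerivAt_const x (g1 t p)).add ((hasDerivAt_id' x).const_mul r) |>.congr_deriv
        (by ring)
    have hC2 : HasDerivAt (fun s : ℝ => g2 t p + r * s * p) (r * p) x := by
      have := (hasDerivAt_const x (g2 t p)).add
        (((hasDerivAt_id' x).const_mul r).mul_const p)
      exact this.congr_deriv (by ring)
    have H : HasDerivAt (fun s => δ t / 2 * p ^ 2 * DL ep (DL ep F) (t,s,u,p)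
        + p * DL eu F (t,s,u,p) * (g1 t p + r * s)
        + DL ex F (t,s,u,p) * (g1 t p + r * s)
        - DL eu F (t,s,u,p) * (g2 t p + r * s * p)
        - DL ep F (t,s,u,p) * (r * p)
        + DL et F (t,s,u,p))
        (δ t / 2 * p ^ 2 * DL ex (DL ep (DL ep F)) (t,x,u,p)
          + (p * DL ex (DL eu F) (t,x,u,p) * (g1 t p + r * x)
            + p * DL eu F (t,x,u,p) * (r * 1))
          + (DL ex (DL ex F) (t,x,u,p) * (g1 t p + r * x)
            + DL ex F (t,x,u,p) * (r * 1))
          - (DL ex (DL eu F) (t,x,u,p) * (g2 t p + r * x * p)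
            + DL eu F (t,x,u,p) * (r * p))
          - DL ex (DL ep F) (t,x,u,p) * (r * p)
          + DL ex (DL et F) (t,x,u,p)) x := by
      have h1 := (hasDerivAt_line_x (hd2 ep ep (t,x,u,p))).const_mul (δ t / 2 * p ^ 2)
      have h2 := ((hasDerivAt_line_x (hd1 eu (t,x,u,p))).const_mul p).mul hC1
      have h3 := (hasDerivAt_line_x (hd1 ex (t,x,u,p))).mul hC1
      have h4 := (hasDerivAt_line_x (hd1 eu (t,x,u,p))).mul hC2
      have h5 := (hasDerivAt_line_x (hd1 ep (t,x,u,p))).mul_const (r * p)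
      have h6 := hasDerivAt_line_x (hd1 et (t,x,u,p))
      have := ((((h1.add h2).add h3).sub h4).sub h5).add h6
      convert this using 1
      all_goals rfl
    have H0 := H.congr_of_eventuallyEq
      (Filter.Eventually.of_forall (fun s => (E1 t s u p).symm))
    have hval := H0.unique (hasDerivAt_const x 0)
    linear_combination hval
  -- the key reduced identity (†)
  have hdag : ∀ t x u p : ℝ, p ≠ 0 →
      δ t * p ^ 2 * DL eu (DL ep F) (t,x,u,p) - p * DL eu (DL et F) (t,x,u,p)
        - DL ex (DL et F) (t,x,u,p) = 0 := by
    intro t x u p hp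
    have h1u := d1u t x u p
    have h1x := d1x t x u p
    have h2p := d2p t x u p
    have hE2 := E2 t x u p
    obtain ⟨hB, hC⟩ := hBC t x u p hp
    have σ1 : DL ex (DL ep (DL ep F)) (t,x,u,p) = DL ep (DL ex (DL ep F)) (t,x,u,p) :=
      swap12 ex ep ep _
    have σ2 : DL ep (DL eu (DL ep F)) (t,x,u,p) = DL eu (DL ep (DL ep F)) (t,x,u,p) :=
      swap12 ep eu ep _
    have σ3 : DL ex (DL eu F) (t,x,u,p) = DL eu (DL ex F) (t,x,u,p) :=
      swap2 ex eu _
    have σ4 : DL ep (DL ex F) (t,x,u,p) = DL ex (DL ep F) (t,x,u,p) :=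
      swap2 ep ex _
    have key : p * (δ t * p ^ 2 * DL eu (DL ep F) (t,x,u,p)
        - p * DL eu (DL et F) (t,x,u,p) - DL ex (DL et F) (t,x,u,p)) = 0 := by
      linear_combination (-(p ^ 2)) * h1u + (-p) * h1x + (δ t / 2 * p ^ 2) * h2p
        + (-(r * p)) * hE2 + (δ t / 2 * p ^ 3) * σ1 + (-(δ t / 2 * p ^ 4)) * σ2
        + (p ^ 2 * (g1 t p + r * x) - p * (g2 t p + r * x * p)) * σ3
        + (δ t / 2 * p ^ 2) * σ4
        + (2 * p ^ 2 * (g1 t p + r * x) - p * (g2 t p + r * x * p)) * hB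
        + (p * (g1 t p + r * x)) * hC
    rcases mul_eq_zero.1 key with hc | hc
    · exact absurd hc hp
    · exact hc
  -- A = 0 for p ≠ 0
  have hAne : ∀ t x u p : ℝ, p ≠ 0 → DL eu (DL eu F) (t,x,u,p) = 0 := by
    intro t x u p hp
    have hδ : δ t ≠ 0 := (hδpos t).ne'
    -- derivative of (†) in u
    have ddu : δ t * p ^ 2 * DL eu (DL eu (DL ep F)) (t,x,u,p)
        - p * DL eu (DL eu (DL et F)) (t,x,u,p)
        - DL eu (DL ex (DL et F)) (t,x,u,p) = 0 := by
      have H : HasDerivAt (fun s => δ t * p ^ 2 * DL eu (DL ep F) (t,x,s,p)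
          - p * DL eu (DL et F) (t,x,s,p) - DL ex (DL et F) (t,x,s,p))
          (δ t * p ^ 2 * DL eu (DL eu (DL ep F)) (t,x,u,p)
            - p * DL eu (DL eu (DL et F)) (t,x,u,p)
            - DL eu (DL ex (DL et F)) (t,x,u,p)) u :=
        (((hasDerivAt_line_u (hd2 eu ep _)).const_mul (δ t * p ^ 2)).sub
          ((hasDerivAt_line_u (hd2 eu et _)).const_mul p)).sub
          (hasDerivAt_line_u (hd2 ex et _))
      have H0 := H.congr_of_eventuallyEq
        (Filter.Eventually.of_forall (fun s => (hdag t x s p hp).symm))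
      exact H0.unique (hasDerivAt_const u 0)
    -- derivative of (†) in x
    have ddx : δ t * p ^ 2 * DL ex (DL eu (DL ep F)) (t,x,u,p)
        - p * DL ex (DL eu (DL et F)) (t,x,u,p)
        - DL ex (DL ex (DL et F)) (t,x,u,p) = 0 := by
      have H : HasDerivAt (fun s => δ t * p ^ 2 * DL eu (DL ep F) (t,s,u,p)
          - p * DL eu (DL et F) (t,s,u,p) - DL ex (DL et F) (t,s,u,p))
          (δ t * p ^ 2 * DL ex (DL eu (DL ep F)) (t,x,u,p)
            - p * DL ex (DL eu (DL et F)) (t,x,u,p)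
            - DL ex (DL ex (DL et F)) (t,x,u,p)) x :=
        (((hasDerivAt_line_x (hd2 eu ep _)).const_mul (δ t * p ^ 2)).sub
          ((hasDerivAt_line_x (hd2 eu et _)).const_mul p)).sub
          (hasDerivAt_line_x (hd2 ex et _))
      have H0 := H.congr_of_eventuallyEq
        (Filter.Eventually.of_forall (fun s => (hdag t s u p hp).symm))
      exact H0.unique (hasDerivAt_const x 0)
    -- t-derivative of B = -pA : Tb = -p Ta
    have hbt : DL et (DL eu (DL ex F)) (t,x,u,p)
        = -p * DL et (DL eu (DL eu F)) (t,x,u,p) := by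
      have H1 : HasDerivAt (fun s => DL eu (DL ex F) (s,x,u,p))
          (DL et (DL eu (DL ex F)) (t,x,u,p)) t := hasDerivAt_line_t (hd2 eu ex _)
      have H2 : HasDerivAt (fun s => -p * DL eu (DL eu F) (s,x,u,p))
          (-p * DL et (DL eu (DL eu F)) (t,x,u,p)) t :=
        (hasDerivAt_line_t (hd2 eu eu _)).const_mul (-p)
      have H2' := H2.congr_of_eventuallyEq
        (Filter.Eventually.of_forall (fun s => ((hBC s x u p hp).1)))
      exact H2'.unique H1 ▸ rfl
    -- t-derivative of C = p^2 A : Tc = p^2 Ta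
    have hct : DL et (DL ex (DL ex F)) (t,x,u,p)
        = p ^ 2 * DL et (DL eu (DL eu F)) (t,x,u,p) := by
      have H1 : HasDerivAt (fun s => DL ex (DL ex F) (s,x,u,p))
          (DL et (DL ex (DL ex F)) (t,x,u,p)) t := hasDerivAt_line_t (hd2 ex ex _)
      have H2 : HasDerivAt (fun s => p ^ 2 * DL eu (DL eu F) (s,x,u,p))
          (p ^ 2 * DL et (DL eu (DL eu F)) (t,x,u,p)) t :=
        (hasDerivAt_line_t (hd2 eu eu _)).const_mul (p ^ 2)
      have H2' := H2.congr_of_eventuallyEq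
        (Filter.Eventually.of_forall (fun s => ((hBC s x u p hp).2)))
      exact H1.unique H2'
    -- permutations for ddu
    have ρ1 : DL eu (DL eu (DL ep F)) (t,x,u,p) = DL ep (DL eu (DL eu F)) (t,x,u,p) :=
      (swap23 eu eu ep _).trans (swap12 eu ep eu _)
    have ρ2 : DL eu (DL eu (DL et F)) (t,x,u,p) = DL et (DL eu (DL eu F)) (t,x,u,p) :=
      (swap23 eu eu et _).trans (swap12 eu et eu _)
    have ρ3 : DL eu (DL ex (DL et F)) (t,x,u,p) = DL et (DL eu (DL ex F)) (t,x,u,p) :=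
      (swap23 eu ex et _).trans (swap12 eu et ex _)
    -- a_p = 0
    have hap : DL ep (DL eu (DL eu F)) (t,x,u,p) = 0 := by
      have h0 : δ t * p ^ 2 * DL ep (DL eu (DL eu F)) (t,x,u,p) = 0 := by
        linear_combination ddu - (δ t * p ^ 2) * ρ1 + p * ρ2 + ρ3 + hbt
      have hne : δ t * p ^ 2 ≠ 0 := mul_ne_zero hδ (pow_ne_zero 2 hp)
      exact (mul_eq_zero.1 h0).resolve_left hne
    -- p-derivative of B = -pA : Pb = -A - p a_p = -A
    have hbp : DL ep (DL eu (DL ex F)) (t,x,u,p)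
        = -1 * DL eu (DL eu F) (t,x,u,p)
          + -p * DL ep (DL eu (DL eu F)) (t,x,u,p) := by
      have H1 : HasDerivAt (fun s => DL eu (DL ex F) (t,x,u,s))
          (DL ep (DL eu (DL ex F)) (t,x,u,p)) p := hasDerivAt_line_p (hd2 eu ex _)
      have H2 : HasDerivAt (fun s => -s * DL eu (DL eu F) (t,x,u,s))
          (-1 * DL eu (DL eu F) (t,x,u,p)
            + -p * DL ep (DL eu (DL eu F)) (t,x,u,p)) p :=
        ((hasDerivAt_id' p).neg).mul (hasDerivAt_line_p (hd2 eu eu _))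
      have hev : (fun s => DL eu (DL ex F) (t,x,u,s))
          =ᶠ[nhds p] (fun s => -s * DL eu (DL eu F) (t,x,u,s)) := by
        filter_upwards [eventually_ne_nhds hp] with s hs
        exact (hBC t x u s hs).1
      have H2' := H2.congr_of_eventuallyEq hev.symm.symm
      exact H1.unique H2'
    -- permutations for ddx
    have τ1 : DL ex (DL eu (DL ep F)) (t,x,u,p) = DL ep (DL eu (DL ex F)) (t,x,u,p) :=
      (swap23 ex eu ep _).trans ((swap12 ex ep eu _).trans (swap23 ep ex eu _))
    have τ2 : DL ex (DL eu (DL et F)) (t,x,u,p) = DL et (DL eu (DL ex F)) (t,x,u,p) :=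
      (swap23 ex eu et _).trans ((swap12 ex et eu _).trans (swap23 et ex eu _))
    have τ3 : DL ex (DL ex (DL et F)) (t,x,u,p) = DL et (DL ex (DL ex F)) (t,x,u,p) :=
      (swap23 ex ex et _).trans (swap12 ex et ex _)
    have h0 : δ t * p ^ 2 * DL eu (DL eu F) (t,x,u,p) = 0 := by
      linear_combination (-1 : ℝ) * ddx + (δ t * p ^ 2) * τ1 - p * τ2 - τ3
        + (δ t * p ^ 2) * hbp - (δ t * p ^ 3) * hap - p * hbt - hct
    have hne : δ t * p ^ 2 ≠ 0 := mul_ne_zero hδ (pow_ne_zero 2 hp)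
    exact (mul_eq_zero.1 h0).resolve_left hne
  -- A = 0 everywhere by continuity
  have hA : ∀ z : E4, DL eu (DL eu F) z = 0 := by
    have hcont : Continuous (DL eu (DL eu F)) := (cd_DL2 hF eu eu).continuous
    rintro ⟨t, x, u, p⟩
    rcases eq_or_ne p 0 with hp | hp
    · subst hp
      have hcl : Continuous (fun s : ℝ => DL eu (DL eu F) (t,x,u,s)) := by
        fun_prop
      have h1 : Filter.Tendsto (fun s : ℝ => DL eu (DL eu F) (t,x,u,s))
          (nhdsWithin 0 {(0:ℝ)}ᶜ) (nhds (DL eu (DL eu F) (t,x,u,0))) :=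
        (hcl.continuousAt).tendsto.mono_left nhdsWithin_le_nhds
      have h2 : Filter.Tendsto (fun s : ℝ => DL eu (DL eu F) (t,x,u,s))
          (nhdsWithin 0 {(0:ℝ)}ᶜ) (nhds 0) := by
        apply Filter.Tendsto.congr' _ tendsto_const_nhds
        filter_upwards [self_mem_nhdsWithin] with s hs
        exact (hAne t x u s hs).symm
      exact tendsto_nhds_unique h1 h2
    · exact hAne t x u p hp
  -- B = 0 everywhere
  have hB : ∀ z : E4, DL eu (DL ex F) z = 0 := by
    have hBne : ∀ t x u p : ℝ, p ≠ 0 → DL eu (DL ex F) (t,x,u,p) = 0 := by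
      intro t x u p hp
      rw [(hBC t x u p hp).1, hA]
      ring
    rintro ⟨t, x, u, p⟩
    rcases eq_or_ne p 0 with hp | hp
    · subst hp
      have hcl : Continuous (fun s : ℝ => DL eu (DL ex F) (t,x,u,s)) := by
        have := (cd_DL2 hF eu ex).continuous
        fun_prop
      have h1 : Filter.Tendsto (fun s : ℝ => DL eu (DL ex F) (t,x,u,s))
          (nhdsWithin 0 {(0:ℝ)}ᶜ) (nhds (DL eu (DL ex F) (t,x,u,0))) :=
        (hcl.continuousAt).tendsto.mono_left nhdsWithin_le_nhds
      have h2 : Filter.Tendsto (fun s : ℝ => DL eu (DL ex F) (t,x,u,s))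
          (nhdsWithin 0 {(0:ℝ)}ᶜ) (nhds 0) := by
        apply Filter.Tendsto.congr' _ tendsto_const_nhds
        filter_upwards [self_mem_nhdsWithin] with s hs
        exact (hBne t x u s hs).symm
      exact tendsto_nhds_unique h1 h2
    · exact hBne t x u p hp
  -- C = 0 everywhere
  have hC : ∀ z : E4, DL ex (DL ex F) z = 0 := by
    intro z
    obtain ⟨t, x, u, p⟩ := z
    have := E3 t x u p
    rw [hA, hB] at this
    linarith
  refine ⟨hA, hB, hC, ?_⟩
  -- representation
  have hBsw : ∀ z : E4, DL ex (DL eu F) z = 0 := fun z => (swap2 ex eu z).trans (hB z)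
  have f1const : ∀ t x u p : ℝ, DL eu F (t,x,u,p) = DL eu F (t,0,0,p) := by
    intro t x u p
    have h1 : DL eu F (t,x,u,p) = DL eu F (t,x,0,p) := by
      have hdiff : Differentiable ℝ (fun s => DL eu F (t,x,s,p)) := fun s =>
        (hasDerivAt_line_u (hd1 eu _)).differentiableAt
      have hder : ∀ s, deriv (fun s => DL eu F (t,x,s,p)) s = 0 := fun s => by
        rw [(hasDerivAt_line_u (hd1 eu _)).deriv]; exact hA _
      exact is_const_of_deriv_eq_zero hdiff hder u 0
    have h2 : DL eu F (t,x,0,p) = DL eu F (t,0,0,p) := by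
      have hdiff : Differentiable ℝ (fun s => DL eu F (t,s,0,p)) := fun s =>
        (hasDerivAt_line_x (hd1 eu _)).differentiableAt
      have hder : ∀ s, deriv (fun s => DL eu F (t,s,0,p)) s = 0 := fun s => by
        rw [(hasDerivAt_line_x (hd1 eu _)).deriv]; exact hBsw _
      exact is_const_of_deriv_eq_zero hdiff hder x 0
    exact h1.trans h2
  have f2const : ∀ t x p : ℝ, DL ex F (t,x,0,p) = DL ex F (t,0,0,p) := by
    intro t x p
    have hdiff : Differentiable ℝ (fun s => DL ex F (t,s,0,p)) := fun s =>
      (hasDerivAt_line_x (hd1 ex _)).differentiableAt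
    have hder : ∀ s, deriv (fun s => DL ex F (t,s,0,p)) s = 0 := fun s => by
      rw [(hasDerivAt_line_x (hd1 ex _)).deriv]; exact hC _
    exact is_const_of_deriv_eq_zero hdiff hder x 0
  refine ⟨fun t p => DL eu F (t,0,0,p), fun t p => DL ex F (t,0,0,p),
    fun t p => F (t,0,0,p), ?_⟩
  intro t x u p
  have hu : F (t,x,u,p) - DL eu F (t,0,0,p) * u = F (t,x,0,p) - DL eu F (t,0,0,p) * 0 := by
    have hdiff : Differentiable ℝ (fun s => F (t,x,s,p) - DL eu F (t,0,0,p) * s) :=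
      fun s => ((hasDerivAt_line_u (hdF _)).sub
        ((hasDerivAt_id' s).const_mul (DL eu F (t,0,0,p)))).differentiableAt
    have hder : ∀ s, deriv (fun s => F (t,x,s,p) - DL eu F (t,0,0,p) * s) s = 0 := by
      intro s
      rw [HasDerivAt.deriv (f := fun s => F (t,x,s,p) - DL eu F (t,0,0,p) * s) ((hasDerivAt_line_u (hdF _)).sub
        ((hasDerivAt_id' s).const_mul (DL eu F (t,0,0,p))))]
      rw [f1const t x s p]
      ring
    exact is_const_of_deriv_eq_zero hdiff hder u 0
  have hx : F (t,x,0,p) - DL ex F (t,0,0,p) * x = F (t,0,0,p) - DL ex F (t,0,0,p) * 0 := by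
    have hdiff : Differentiable ℝ (fun s => F (t,s,0,p) - DL ex F (t,0,0,p) * s) :=
      fun s => ((hasDerivAt_line_x (hdF _)).sub
        ((hasDerivAt_id' s).const_mul (DL ex F (t,0,0,p)))).differentiableAt
    have hder : ∀ s, deriv (fun s => F (t,s,0,p) - DL ex F (t,0,0,p) * s) s = 0 := by
      intro s
      rw [HasDerivAt.deriv (f := fun s => F (t,s,0,p) - DL ex F (t,0,0,p) * s) ((hasDerivAt_line_x (hdF _)).sub
        ((hasDerivAt_id' s).const_mul (DL ex F (t,0,0,p))))]
      rw [f2const t s p]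
      ring
    exact is_const_of_deriv_eq_zero hdiff hder x 0
  linarith [hu, hx]

/-- Structural lemma for the Merton HJB symmetry classification: the determining
equations for `u_t − (δ(t)/2)u_x²/u_{xx} + K(t,x,u_x) = 0` with
`K(t,x,p) = h(t,p) + r·x·p` force `∂_{ux}Ω = ∂_{uu}Ω = ∂_{xx}Ω = 0`, hence
`Ω(t,x,u,p) = f₁(t,p)u + f₂(t,p)x + f₃(t,p)`. -/
theorem merton_symmetry_structure
    (δ : ℝ → ℝ) (hδc : Continuous δ) (hδpos : ∀ t, 0 < δ t)
    (h : ℝ → ℝ → ℝ) (hh : ContDiff ℝ (⊤ : ℕ∞) (fun z : ℝ × ℝ => h z.1 z.2))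
    (r : ℝ)
    (K : ℝ → ℝ → ℝ → ℝ → ℝ) (hK : ∀ t x u p, K t x u p = h t p + r * x * p)
    (Ω : ℝ → ℝ → ℝ → ℝ → ℝ)
    (hΩ : ContDiff ℝ 3 (fun z : ℝ × ℝ × ℝ × ℝ => Ω z.1 z.2.1 z.2.2.1 z.2.2.2))
    (heq1 : ∀ t x u p,
      δ t / 2 * p ^ 2 * pp (pp Ω) t x u p
        + p * pu Ω t x u p * pp K t x u p
        + px Ω t x u p * pp K t x u p
        - pu Ω t x u p * K t x u p
        - pp Ω t x u p * px K t x u p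
        + pt Ω t x u p = 0)
    (heq2 : ∀ t x u p,
      δ t * p ^ 2 * pu (pp Ω) t x u p + δ t * p * px (pp Ω) t x u p
        - δ t * px Ω t x u p = 0)
    (heq3 : ∀ t x u p,
      δ t / 2 * p ^ 2 * pu (pu Ω) t x u p + δ t * p * pu (px Ω) t x u p
        + δ t / 2 * px (px Ω) t x u p = 0) :
    (∀ t x u p, pu (px Ω) t x u p = 0 ∧ pu (pu Ω) t x u p = 0
        ∧ px (px Ω) t x u p = 0)
    ∧ ∃ f₁ f₂ f₃ : ℝ → ℝ → ℝ, ∀ t x u p,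
        Ω t x u p = f₁ t p * u + f₂ t p * x + f₃ t p := by
  set F : E4 → ℝ := fun z : ℝ × ℝ × ℝ × ℝ => Ω z.1 z.2.1 z.2.2.1 z.2.2.2 with hFdef
  have hF : ContDiff ℝ 3 F := hΩ
  have hdF : Differentiable ℝ F := hF.differentiable (by norm_num)
  have hd1 : ∀ v, Differentiable ℝ (DL v F) := fun v =>
    (cd_DL1 hF v).differentiable two_ne_zero
  have hΩF : ∀ t x u p : ℝ, Ω t x u p = F (t,x,u,p) := fun _ _ _ _ => rfl
  have tr_pt : ∀ t x u p : ℝ, pt Ω t x u p = DL et F (t,x,u,p) := pt_eq hdF hΩF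
  have tr_px : ∀ t x u p : ℝ, px Ω t x u p = DL ex F (t,x,u,p) := px_eq hdF hΩF
  have tr_pu : ∀ t x u p : ℝ, pu Ω t x u p = DL eu F (t,x,u,p) := pu_eq hdF hΩF
  have tr_pp : ∀ t x u p : ℝ, pp Ω t x u p = DL ep F (t,x,u,p) := pp_eq hdF hΩF
  have tr_pupp : ∀ t x u p : ℝ, pu (pp Ω) t x u p = DL eu (DL ep F) (t,x,u,p) :=
    pu_eq (hd1 ep) tr_pp
  have tr_pxpp : ∀ t x u p : ℝ, px (pp Ω) t x u p = DL ex (DL ep F) (t,x,u,p) :=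
    px_eq (hd1 ep) tr_pp
  have tr_pupu : ∀ t x u p : ℝ, pu (pu Ω) t x u p = DL eu (DL eu F) (t,x,u,p) :=
    pu_eq (hd1 eu) tr_pu
  have tr_pupx : ∀ t x u p : ℝ, pu (px Ω) t x u p = DL eu (DL ex F) (t,x,u,p) :=
    pu_eq (hd1 ex) tr_px
  have tr_pxpx : ∀ t x u p : ℝ, px (px Ω) t x u p = DL ex (DL ex F) (t,x,u,p) :=
    px_eq (hd1 ex) tr_px
  have tr_pppp : ∀ t x u p : ℝ, pp (pp Ω) t x u p = DL ep (DL ep F) (t,x,u,p) :=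
    pp_eq (hd1 ep) tr_pp
  -- derivatives of K
  have hht : ∀ t : ℝ, Differentiable ℝ (fun s => h t s) := by
    intro t
    have hhd : Differentiable ℝ (fun z : ℝ × ℝ => h z.1 z.2) := hh.differentiable (by simp)
    exact hhd.comp ((differentiable_const t).prodMk differentiable_id)
  have tr_ppK : ∀ t x u p : ℝ, pp K t x u p = deriv (fun s => h t s) p + r * x := by
    intro t x u p
    have hfun : (fun s => K t x u s) = fun s => h t s + r * x * s :=
      funext fun s => hK t x u s
    show deriv (fun s => K t x u s) p = _
    rw [hfun]
    have hd : HasDerivAt (fun s : ℝ => h t s + r * x * s)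
        (deriv (fun s => h t s) p + r * x) p := by
      have h1 : HasDerivAt (fun s : ℝ => h t s) (deriv (fun s => h t s) p) p :=
        ((hht t) p).hasDerivAt
      have h2 : HasDerivAt (fun s : ℝ => r * x * s) (r * x) p := by
        simpa using (hasDerivAt_id' p).const_mul (r * x)
      exact h1.add h2
    exact hd.deriv
  have tr_pxK : ∀ t x u p : ℝ, px K t x u p = r * p := by
    intro t x u p
    have hfun : (fun s => K t s u p) = fun s => h t p + r * s * p :=
      funext fun s => hK t s u p
    show deriv (fun s => K t s u p) x = _
    rw [hfun]
    have hd : HasDerivAt (fun s : ℝ => h t p + r * s * p) (r * p) x := by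
      have h2 : HasDerivAt (fun s : ℝ => r * s * p) (r * p) x := by
        simpa using ((hasDerivAt_id' x).const_mul r).mul_const p
      exact h2.const_add (h t p)
    exact hd.deriv
  -- translated determining equations
  have E1 : ∀ t x u p : ℝ, δ t / 2 * p ^ 2 * DL ep (DL ep F) (t,x,u,p)
      + p * DL eu F (t,x,u,p) * ((fun t p => deriv (fun s => h t s) p) t p + r * x)
      + DL ex F (t,x,u,p) * ((fun t p => deriv (fun s => h t s) p) t p + r * x)
      - DL eu F (t,x,u,p) * ((fun t p => h t p) t p + r * x * p)
      - DL ep F (t,x,u,p) * (r * p)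
      + DL et F (t,x,u,p) = 0 := by
    intro t x u p
    have h1 := heq1 t x u p
    rw [tr_pppp, tr_pu, tr_px, tr_pp, tr_pt, tr_ppK, tr_pxK, hK] at h1
    linear_combination h1
  have E2 : ∀ t x u p : ℝ, p ^ 2 * DL eu (DL ep F) (t,x,u,p)
      + p * DL ex (DL ep F) (t,x,u,p) - DL ex F (t,x,u,p) = 0 := by
    intro t x u p
    have h2 := heq2 t x u p
    rw [tr_pupp, tr_pxpp, tr_px] at h2
    have hδ : δ t ≠ 0 := (hδpos t).ne'
    apply mul_left_cancel₀ hδ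
    linear_combination h2
  have E3 : ∀ t x u p : ℝ, p ^ 2 * DL eu (DL eu F) (t,x,u,p)
      + 2 * p * DL eu (DL ex F) (t,x,u,p) + DL ex (DL ex F) (t,x,u,p) = 0 := by
    intro t x u p
    have h3 := heq3 t x u p
    rw [tr_pupu, tr_pupx, tr_pxpx] at h3
    have hδ : δ t / 2 ≠ 0 := by have := hδpos t; intro hcon; nlinarith
    apply mul_left_cancel₀ hδ
    linear_combination h3
  obtain ⟨hA, hB, hC, f₁, f₂, f₃, hrep⟩ := aux F hF δ hδpos r
    (fun t p => deriv (fun s => h t s) p) (fun t p => h t p) E1 E2 E3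
  constructor
  · intro t x u p
    refine ⟨?_, ?_, ?_⟩
    · rw [tr_pupx]; exact hB _
    · rw [tr_pupu]; exact hA _
    · rw [tr_pxpx]; exact hC _
  · exact ⟨f₁, f₂, f₃, fun t x u p => hrep t x u p⟩

end Stmt6
end

section
/- Let r ∈ ℝ and suppose f₁, f₂ : ℝ × ℝ → ℝ (arguments (t,p)) are C² functions satisfying: (a) p²∂_{pp}f₁ + 2∂_t f₁ = 0; (b) p²∂_{pp}f₂ + 2∂_t f₂ − 2r f₂ = 0; (c) p²∂_p f₁ + p∂_p f₂ − f₂ = 0. Then there exist constants d₁, d₂, d₃ ∈ ℝ (with d₂/r interpreted appropriately when r ≠ 0) such that for p > 0: f₁(t,p) = d₁ exp(−r(r−1)t/2) p^r − d₂/r and f₂(t,p) = −d₁ exp(−r(r−1)t/2) p^{r+1} + d₃ e^{rt} p. Conversely, for any constants d₁, d₂, d₃, these functions satisfy (a), (b), (c). -/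
open Real Set

namespace Stmt7

/-- Partial derivative in `t` of a function of `(t,p)`. -/
noncomputable def dt (F : ℝ → ℝ → ℝ) : ℝ → ℝ → ℝ := fun t p => deriv (fun s => F s p) t

/-- Partial derivative in `p` of a function of `(t,p)`. -/
noncomputable def dp (F : ℝ → ℝ → ℝ) : ℝ → ℝ → ℝ := fun t p => deriv (fun s => F t s) p

/-!
Dividing (c) by `p²` shows that `f₁ + f₂ / p` does not depend on `p`, so
`f₂ = p (β(t) - f₁)` with `β(t) = f₁(t,1) + f₂(t,1)`. Substituting this into (b) and using (a)
turns (b) into Euler's equation `p ∂_p f₁ = r f₁ + k(t)`, whence `f₁ = c(t) p^r - k(t)/r`.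
Equation (a) then forces `c' = -r(r-1)c/2` and `k' = 0`, and `β' = rβ + k` integrates to an
exponential.
-/

theorem eq_mul_exp_of_hasDerivAt {c : ℝ → ℝ} {k : ℝ} (hc : ∀ t, HasDerivAt c (k * c t) t)
    (t : ℝ) : c t = c 0 * exp (k * t) := by
  have hderiv (u : ℝ) : HasDerivAt (fun u => c u * exp (-(k * u))) 0 u :=
    ((hc u).mul ((hasDerivAt_id u).const_mul k).neg.exp).congr_deriv
      (by simp only [id_eq, Pi.neg_apply, mul_one, mul_neg]; ring)
  have hconst := is_const_of_deriv_eq_zero (fun u => (hderiv u).differentiableAt)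
    (fun u => (hderiv u).deriv) t 0
  simp only [mul_zero, neg_zero, exp_zero, mul_one] at hconst
  rw [← hconst, mul_assoc, ← exp_add, neg_add_cancel, exp_zero, mul_one]

theorem eq_mul_rpow_of_hasDerivAt {g : ℝ → ℝ} {r : ℝ} (hg : ∀ x > 0, HasDerivAt g (r * g x / x) x)
    {x : ℝ} (hx : 0 < x) : g x = g 1 * x ^ r := by
  have hexp := eq_mul_exp_of_hasDerivAt (c := g ∘ exp) (k := r) fun u =>
    ((hg (exp u) (exp_pos u)).comp u (hasDerivAt_exp u)).congr_deriv
      (div_mul_cancel₀ _ (exp_ne_zero u))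
  simpa [exp_log hx, rpow_def_of_pos hx, mul_comm r] using hexp (log x)

theorem eq_of_hasDerivAt_zero_Ioi {g : ℝ → ℝ} (hg : ∀ x > 0, HasDerivAt g 0 x) {x : ℝ}
    (hx : 0 < x) : g x = g 1 :=
  isOpen_Ioi.is_const_of_deriv_eq_zero (convex_Ioi 0).isPreconnected
    (fun y hy => (hg y hy).differentiableAt.differentiableWithinAt) (fun y hy => (hg y hy).deriv)
    hx (mem_Ioi.2 one_pos)

section PartialDerivatives

variable {F : ℝ → ℝ → ℝ} {n : WithTop ℕ∞}

theorem contDiffOn_left_slice {s u : Set ℝ}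
    (hF : ContDiffOn ℝ n (fun z : ℝ × ℝ => F z.1 z.2) (s ×ˢ u)) {p : ℝ} (hp : p ∈ u) :
    ContDiffOn ℝ n (fun x => F x p) s :=
  hF.comp (contDiffOn_id.prodMk contDiffOn_const) fun _ hx => ⟨hx, hp⟩

theorem contDiffOn_right_slice {s u : Set ℝ}
    (hF : ContDiffOn ℝ n (fun z : ℝ × ℝ => F z.1 z.2) (s ×ˢ u)) {t : ℝ} (ht : t ∈ s) :
    ContDiffOn ℝ n (F t) u :=
  hF.comp (contDiffOn_const.prodMk contDiffOn_id) fun _ hx => ⟨ht, hx⟩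

theorem hasDerivAt_dt (hF : ContDiffOn ℝ n (fun z : ℝ × ℝ => F z.1 z.2) (univ ×ˢ Ioi 0))
    (hn : n ≠ 0) (t : ℝ) {p : ℝ} (hp : 0 < p) : HasDerivAt (fun s => F s p) (dt F t p) t :=
  (((contDiffOn_left_slice hF hp).differentiableOn hn).differentiableAt
    Filter.univ_mem).hasDerivAt

theorem hasDerivAt_dp (hF : ContDiffOn ℝ n (fun z : ℝ × ℝ => F z.1 z.2) (univ ×ˢ Ioi 0))
    (hn : n ≠ 0) (t : ℝ) {p : ℝ} (hp : 0 < p) : HasDerivAt (F t) (dp F t p) p :=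
  (((contDiffOn_right_slice hF (mem_univ t)).differentiableOn hn).differentiableAt
    (isOpen_Ioi.mem_nhds hp)).hasDerivAt

theorem hasDerivAt_dp_dp (hF : ContDiffOn ℝ 2 (fun z : ℝ × ℝ => F z.1 z.2) (univ ×ˢ Ioi 0))
    (t : ℝ) {p : ℝ} (hp : 0 < p) : HasDerivAt (dp F t) (dp (dp F) t p) p :=
  ((((contDiffOn_right_slice hF (mem_univ t)).deriv_of_isOpen isOpen_Ioi
    (m := 1) (by norm_num)).differentiableOn one_ne_zero).differentiableAt
    (isOpen_Ioi.mem_nhds hp)).hasDerivAt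

theorem dp_dp_eq_of_hasDerivAt {G : ℝ → ℝ} {g t p : ℝ} (hp : 0 < p)
    (hF : ∀ s > 0, HasDerivAt (F t) (G s) s) (hG : HasDerivAt G g p) : dp (dp F) t p = g :=
  (hG.congr_of_eventuallyEq (Filter.eventually_of_mem (isOpen_Ioi.mem_nhds hp)
    fun s hs => (hF s hs).deriv)).deriv

end PartialDerivatives

section Forward

variable {r : ℝ} {f f₁ f₂ : ℝ → ℝ → ℝ}

theorem eq_mul_sub_of_coupling
    (h₁ : ContDiffOn ℝ 1 (fun z : ℝ × ℝ => f₁ z.1 z.2) (univ ×ˢ Ioi 0))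
    (h₂ : ContDiffOn ℝ 1 (fun z : ℝ × ℝ => f₂ z.1 z.2) (univ ×ˢ Ioi 0))
    (hc : ∀ t : ℝ, ∀ p > (0:ℝ), p ^ 2 * dp f₁ t p + p * dp f₂ t p - f₂ t p = 0)
    (t : ℝ) {p : ℝ} (hp : 0 < p) : f₂ t p = p * (f₁ t 1 + f₂ t 1 - f₁ t p) := by
  have hconst := eq_of_hasDerivAt_zero_Ioi (g := fun s => f₁ t s + f₂ t s / s) (fun s hs =>
    ((hasDerivAt_dp h₁ one_ne_zero t hs).add ((hasDerivAt_dp h₂ one_ne_zero t hs).div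
      (hasDerivAt_id s) hs.ne')).congr_deriv
      (by simp only [id_eq]; field_simp; linear_combination hc t s hs)) hp
  rw [div_one] at hconst
  rw [← hconst, add_sub_cancel_left, mul_div_cancel₀ _ hp.ne']

theorem mul_dp_eq_of_system {β β' : ℝ → ℝ}
    (h₁ : ContDiffOn ℝ 2 (fun z : ℝ × ℝ => f₁ z.1 z.2) (univ ×ˢ Ioi 0))
    (hβ : ∀ t, HasDerivAt β (β' t) t) (hrep : ∀ t, ∀ p > (0:ℝ), f₂ t p = p * (β t - f₁ t p))
    (ha : ∀ t : ℝ, ∀ p > (0:ℝ), p ^ 2 * dp (dp f₁) t p + 2 * dt f₁ t p = 0)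
    (hb : ∀ t : ℝ, ∀ p > (0:ℝ),
      p ^ 2 * dp (dp f₂) t p + 2 * dt f₂ t p - 2 * r * f₂ t p = 0)
    (t : ℝ) {p : ℝ} (hp : 0 < p) : p * dp f₁ t p = r * f₁ t p + (β' t - r * β t) := by
  have hdp (s : ℝ) (hs : 0 < s) : HasDerivAt (f₂ t) (β t - f₁ t s - s * dp f₁ t s) s := by
    refine (((hasDerivAt_id s).mul ((hasDerivAt_const s (β t)).sub
      (hasDerivAt_dp h₁ two_ne_zero t hs))).congr_of_eventuallyEq ?_).congr_deriv ?_
    · filter_upwards [isOpen_Ioi.mem_nhds hs] with q hq using hrep t q hq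
    · simp only [Pi.sub_apply, id_eq]; ring
  have hpp : dp (dp f₂) t p = -2 * dp f₁ t p - p * dp (dp f₁) t p :=
    dp_dp_eq_of_hasDerivAt hp hdp ((((hasDerivAt_const p (β t)).sub
      (hasDerivAt_dp h₁ two_ne_zero t hp)).sub ((hasDerivAt_id p).mul
      (hasDerivAt_dp_dp h₁ t hp))).congr_deriv (by simp only [id_eq]; ring))
  have hdt : dt f₂ t p = p * (β' t - dt f₁ t p) := by
    have hslice : (fun s => f₂ s p) = fun s => p * (β s - f₁ s p) := funext fun s => hrep s p hp
    exact (hslice ▸ ((hβ t).sub (hasDerivAt_dt h₁ two_ne_zero t hp)).const_mul p).deriv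
  have hb' := hb t p hp
  rw [hpp, hdt, hrep t p hp] at hb'
  have key : 2 * p * (p * dp f₁ t p - (r * f₁ t p + (β' t - r * β t))) = 0 := by
    linear_combination -hb' - p * ha t p hp
  simpa [hp.ne', sub_eq_zero] using key

theorem coeffs_eq_of_heat {c a : ℝ → ℝ} (hr : r ≠ 0)
    (hf : ContDiffOn ℝ 2 (fun z : ℝ × ℝ => f z.1 z.2) (univ ×ˢ Ioi 0))
    (hform : ∀ t, ∀ p > (0:ℝ), f t p = c t * p ^ r + a t)
    (ha : ∀ t : ℝ, ∀ p > (0:ℝ), p ^ 2 * dp (dp f) t p + 2 * dt f t p = 0) (t : ℝ) :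
    c t = c 0 * exp (-(r * (r - 1) * t) / 2) ∧ a t = a 0 := by
  set l := -(r * (r - 1)) / 2
  have hdt (t p : ℝ) (hp : 0 < p) : dt f t p = l * c t * p ^ r := by
    have hpp : dp (dp f) t p = c t * (r * ((r - 1) * p ^ (r - 1 - 1))) :=
      dp_dp_eq_of_hasDerivAt hp (G := fun s => c t * (r * s ^ (r - 1)))
        (fun s hs => (((Real.hasDerivAt_rpow_const (Or.inl hs.ne')).const_mul (c t)).add_const
          (a t)).congr_of_eventuallyEq (Filter.eventually_of_mem (isOpen_Ioi.mem_nhds hs)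
          fun q hq => hform t q hq))
        (((Real.hasDerivAt_rpow_const (Or.inl hp.ne')).const_mul r).const_mul (c t))
    have ha' := ha t p hp
    rw [hpp, rpow_sub_one hp.ne', rpow_sub_one hp.ne'] at ha'
    field_simp at ha'
    linear_combination ha' / 2
  have hexp_ne : exp r - 1 ≠ 0 := sub_ne_zero.2 (mt (Real.exp_eq_one_iff r).1 hr)
  -- Reading `c` off two slices of `f` shows that it is differentiable.
  have hc (t : ℝ) : c t = (f t (exp 1) - f t 1) / (exp r - 1) := by
    rw [hform t _ (exp_pos 1), hform t 1 one_pos, exp_one_rpow, one_rpow]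
    field_simp
    ring
  have hc_deriv (t : ℝ) : HasDerivAt c (l * c t) t := by
    refine ((((hasDerivAt_dt hf two_ne_zero t (exp_pos 1)).sub
      (hasDerivAt_dt hf two_ne_zero t one_pos)).div_const _).congr_of_eventuallyEq
      (Filter.Eventually.of_forall hc)).congr_deriv ?_
    rw [hdt t _ (exp_pos 1), hdt t 1 one_pos, exp_one_rpow, one_rpow]
    field_simp
  have ha_deriv (t : ℝ) : HasDerivAt a 0 t := by
    refine (((hasDerivAt_dt hf two_ne_zero t one_pos).sub (hc_deriv t)).congr_of_eventuallyEq
      (Filter.Eventually.of_forall fun s => ?_)).congr_deriv ?_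
    · simp [hform s 1 one_pos]
    · rw [hdt t 1 one_pos, one_rpow]; ring
  refine ⟨(eq_mul_exp_of_hasDerivAt hc_deriv t).trans (by congr 2; ring), ?_⟩
  exact is_const_of_deriv_eq_zero (fun s => (ha_deriv s).differentiableAt)
    (fun s => (ha_deriv s).deriv) t 0

theorem eq_of_heat_of_mul_dp_eq {k : ℝ → ℝ} (hr : r ≠ 0)
    (hf : ContDiffOn ℝ 2 (fun z : ℝ × ℝ => f z.1 z.2) (univ ×ˢ Ioi 0))
    (ha : ∀ t : ℝ, ∀ p > (0:ℝ), p ^ 2 * dp (dp f) t p + 2 * dt f t p = 0)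
    (heuler : ∀ t : ℝ, ∀ p > (0:ℝ), p * dp f t p = r * f t p + k t) (t : ℝ) :
    k t = k 0 ∧ ∀ p > (0:ℝ),
      f t p = (f 0 1 + k 0 / r) * exp (-(r * (r - 1) * t) / 2) * p ^ r - k 0 / r := by
  have hform (t p : ℝ) (hp : 0 < p) : f t p = (f t 1 + k t / r) * p ^ r + -(k t / r) := by
    have h := eq_mul_rpow_of_hasDerivAt (r := r) (g := fun s => f t s + k t / r) (fun s hs =>
      ((hasDerivAt_dp hf two_ne_zero t hs).add_const _).congr_deriv
        (by field_simp; linear_combination heuler t s hs)) hp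
    linear_combination h
  obtain ⟨hc, hk⟩ := coeffs_eq_of_heat hr hf hform ha t
  have hk' : k t = k 0 := by simpa [hr] using hk
  refine ⟨hk', fun p hp => ?_⟩
  rw [hform t p hp, hc, hk']
  ring

theorem exists_consts_of_system (hr : r ≠ 0)
    (h₁ : ContDiffOn ℝ 2 (fun z : ℝ × ℝ => f₁ z.1 z.2) (univ ×ˢ Ioi 0))
    (h₂ : ContDiffOn ℝ 2 (fun z : ℝ × ℝ => f₂ z.1 z.2) (univ ×ˢ Ioi 0))
    (ha : ∀ t : ℝ, ∀ p > (0:ℝ), p ^ 2 * dp (dp f₁) t p + 2 * dt f₁ t p = 0)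
    (hb : ∀ t : ℝ, ∀ p > (0:ℝ),
      p ^ 2 * dp (dp f₂) t p + 2 * dt f₂ t p - 2 * r * f₂ t p = 0)
    (hc : ∀ t : ℝ, ∀ p > (0:ℝ), p ^ 2 * dp f₁ t p + p * dp f₂ t p - f₂ t p = 0) :
    ∃ d₁ d₂ d₃ : ℝ, ∀ t : ℝ, ∀ p > (0:ℝ),
      f₁ t p = d₁ * Real.exp (-(r * (r - 1) * t) / 2) * p ^ r - d₂ / r
      ∧ f₂ t p = -d₁ * Real.exp (-(r * (r - 1) * t) / 2) * p ^ (r + 1)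
          + d₃ * Real.exp (r * t) * p := by
  set β : ℝ → ℝ := fun t => f₁ t 1 + f₂ t 1
  set β' : ℝ → ℝ := fun t => dt f₁ t 1 + dt f₂ t 1
  have hβ (t : ℝ) : HasDerivAt β (β' t) t :=
    (hasDerivAt_dt h₁ two_ne_zero t one_pos).add (hasDerivAt_dt h₂ two_ne_zero t one_pos)
  have hrep := eq_mul_sub_of_coupling (h₁.of_le one_le_two) (h₂.of_le one_le_two) hc
  have hsol := eq_of_heat_of_mul_dp_eq hr h₁ ha (mul_dp_eq_of_system h₁ hβ hrep ha hb)
  set k := β' 0 - r * β 0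
  have hβ_exp := eq_mul_exp_of_hasDerivAt (c := fun t => β t + k / r) (k := r) fun t =>
    ((hβ t).add_const _).congr_deriv (by rw [← (hsol t).1]; field_simp; ring)
  refine ⟨f₁ 0 1 + k / r, k, β 0 + k / r, fun t p hp => ⟨(hsol t).2 p hp, ?_⟩⟩
  rw [hrep t hp, (hsol t).2 p hp, rpow_add_one hp.ne']
  linear_combination p * hβ_exp t

end Forward

section Converse

variable {A B C : ℝ → ℝ} {e : ℝ}

theorem hasDerivAt_rpow_affine (t : ℝ) {p : ℝ} (hp : 0 < p) :
    HasDerivAt (fun s => A t * s ^ e + B t * s + C t) (A t * (e * p ^ (e - 1)) + B t) p :=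
  ((((Real.hasDerivAt_rpow_const (Or.inl hp.ne')).const_mul (A t)).add
    ((hasDerivAt_id p).const_mul (B t))).add_const (C t)).congr_deriv (by simp)

theorem dp_rpow_affine (t : ℝ) {p : ℝ} (hp : 0 < p) :
    dp (fun t p => A t * p ^ e + B t * p + C t) t p = A t * (e * p ^ (e - 1)) + B t :=
  (hasDerivAt_rpow_affine t hp).deriv

theorem dp_dp_rpow_affine (t : ℝ) {p : ℝ} (hp : 0 < p) :
    dp (dp (fun t p => A t * p ^ e + B t * p + C t)) t p
      = A t * (e * ((e - 1) * p ^ (e - 1 - 1))) :=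
  dp_dp_eq_of_hasDerivAt (F := fun t p => A t * p ^ e + B t * p + C t) hp
    (fun _ hs => hasDerivAt_rpow_affine t hs)
    ((((Real.hasDerivAt_rpow_const (Or.inl hp.ne')).const_mul e).const_mul (A t)).add_const
      (B t))

theorem dt_rpow_affine {a b c t : ℝ} (hA : HasDerivAt A a t) (hB : HasDerivAt B b t)
    (hC : HasDerivAt C c t) (p : ℝ) :
    dt (fun t p => A t * p ^ e + B t * p + C t) t p = a * p ^ e + b * p + c :=
  (((hA.mul_const _).add (hB.mul_const p)).add hC).deriv

theorem system_of_consts (r d₁ d₂ d₃ : ℝ) :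
    let f₁ : ℝ → ℝ → ℝ := fun t p =>
      d₁ * Real.exp (-(r * (r - 1) * t) / 2) * p ^ r - d₂ / r
    let f₂ : ℝ → ℝ → ℝ := fun t p =>
      -d₁ * Real.exp (-(r * (r - 1) * t) / 2) * p ^ (r + 1)
        + d₃ * Real.exp (r * t) * p
    (∀ t : ℝ, ∀ p > (0:ℝ), p ^ 2 * dp (dp f₁) t p + 2 * dt f₁ t p = 0)
    ∧ (∀ t : ℝ, ∀ p > (0:ℝ),
        p ^ 2 * dp (dp f₂) t p + 2 * dt f₂ t p - 2 * r * f₂ t p = 0)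
    ∧ (∀ t : ℝ, ∀ p > (0:ℝ),
        p ^ 2 * dp f₁ t p + p * dp f₂ t p - f₂ t p = 0) := by
  intro f₁ f₂
  set E : ℝ → ℝ := fun t => exp (-(r * (r - 1) * t) / 2)
  have hE (t : ℝ) : HasDerivAt E (E t * (-(r * (r - 1)) / 2)) t :=
    (((hasDerivAt_id t).const_mul (r * (r - 1))).neg.div_const 2).exp.congr_deriv
      (by simp [E])
  have hR (t : ℝ) : HasDerivAt (fun t => exp (r * t)) (exp (r * t) * r) t :=
    ((hasDerivAt_id t).const_mul r).exp.congr_deriv (by simp)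
  have hf₁ : f₁ = fun t p => d₁ * E t * p ^ r + 0 * p + -(d₂ / r) := by
    funext t p; simp only [f₁, E]; ring
  have hf₂ : f₂ = fun t p => -d₁ * E t * p ^ (r + 1) + d₃ * exp (r * t) * p + 0 := by
    funext t p; simp only [f₂, E]; ring
  have hdt₁ (t p : ℝ) := dt_rpow_affine (e := r) ((hE t).const_mul d₁) (hasDerivAt_const t 0)
    (hasDerivAt_const t (-(d₂ / r))) p
  have hdt₂ (t p : ℝ) := dt_rpow_affine (e := r + 1) ((hE t).const_mul (-d₁))
    ((hR t).const_mul d₃) (hasDerivAt_const t 0) p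
  refine ⟨fun t p hp => ?_, fun t p hp => ?_, fun t p hp => ?_⟩
  · rw [hf₁, dp_dp_rpow_affine t hp, hdt₁]
    simp only [rpow_sub_one hp.ne']
    field_simp
    ring
  · rw [hf₂, dp_dp_rpow_affine t hp, hdt₂]
    simp only [rpow_sub_one hp.ne', rpow_add_one hp.ne']
    field_simp
    ring
  · rw [hf₁, hf₂, dp_rpow_affine t hp, dp_rpow_affine t hp]
    simp only [rpow_sub_one hp.ne', rpow_add_one hp.ne']
    field_simp
    ring

end Converse

/-- Classification of the coefficient functions in the contact symmetries of
Merton's HJB equation (for `r ≠ 0`): the system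
(a) `p²∂_{pp}f₁ + 2∂_t f₁ = 0`, (b) `p²∂_{pp}f₂ + 2∂_t f₂ − 2r f₂ = 0`,
(c) `p²∂_p f₁ + p∂_p f₂ − f₂ = 0` holds (for `p > 0`) exactly for
`f₁ = d₁ e^{−r(r−1)t/2} p^r − d₂/r`, `f₂ = −d₁ e^{−r(r−1)t/2} p^{r+1} + d₃ e^{rt} p`. -/
theorem merton_coefficient_classification (r : ℝ) (hr : r ≠ 0) :
    (∀ f₁ f₂ : ℝ → ℝ → ℝ,
      ContDiffOn ℝ 2 (fun z : ℝ × ℝ => f₁ z.1 z.2) (univ ×ˢ Ioi 0) →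
      ContDiffOn ℝ 2 (fun z : ℝ × ℝ => f₂ z.1 z.2) (univ ×ˢ Ioi 0) →
      (∀ t : ℝ, ∀ p > (0:ℝ), p ^ 2 * dp (dp f₁) t p + 2 * dt f₁ t p = 0) →
      (∀ t : ℝ, ∀ p > (0:ℝ),
        p ^ 2 * dp (dp f₂) t p + 2 * dt f₂ t p - 2 * r * f₂ t p = 0) →
      (∀ t : ℝ, ∀ p > (0:ℝ), p ^ 2 * dp f₁ t p + p * dp f₂ t p - f₂ t p = 0) →
      ∃ d₁ d₂ d₃ : ℝ, ∀ t : ℝ, ∀ p > (0:ℝ),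
        f₁ t p = d₁ * Real.exp (-(r * (r - 1) * t) / 2) * p ^ r - d₂ / r
        ∧ f₂ t p = -d₁ * Real.exp (-(r * (r - 1) * t) / 2) * p ^ (r + 1)
            + d₃ * Real.exp (r * t) * p)
    ∧ (∀ d₁ d₂ d₃ : ℝ,
        let f₁ : ℝ → ℝ → ℝ := fun t p =>
          d₁ * Real.exp (-(r * (r - 1) * t) / 2) * p ^ r - d₂ / r
        let f₂ : ℝ → ℝ → ℝ := fun t p =>
          -d₁ * Real.exp (-(r * (r - 1) * t) / 2) * p ^ (r + 1)
            + d₃ * Real.exp (r * t) * p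
        (∀ t : ℝ, ∀ p > (0:ℝ), p ^ 2 * dp (dp f₁) t p + 2 * dt f₁ t p = 0)
        ∧ (∀ t : ℝ, ∀ p > (0:ℝ),
            p ^ 2 * dp (dp f₂) t p + 2 * dt f₂ t p - 2 * r * f₂ t p = 0)
        ∧ (∀ t : ℝ, ∀ p > (0:ℝ),
            p ^ 2 * dp f₁ t p + p * dp f₂ t p - f₂ t p = 0)) :=
  ⟨fun _ _ h₁ h₂ ha hb hc => exists_consts_of_system hr h₁ h₂ ha hb hc, system_of_consts r⟩

end Stmt7
end
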